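/- arXiv:2202.09052 — 3 statements merged into one kernel-verified Lean document; each statement's English description precedes it below -/
import Mathlib

section
/- Suppose f = g + h where g is μ-PL with infimum g⋆, and h satisfies |h(x)| ≤ B₁ and ‖∇h(x)‖² ≤ B₂ for all x. Then for any two stationary points x, y of f, |f(x) − f(y)| ≤ 2B₁ + B₂/(2μ). -/
/-!
At a stationary point of `f = g + h` we have `∇g = -∇h`, so `‖∇g‖² ≤ B₂`, and the PL inequality
pins `g` to within `B₂ / (2μ)` above `g⋆`. Hence `g` varies by at most `B₂ / (2μ)` between two
stationary points, while `h` varies by at most `2B₁`.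
-/

open InnerProductSpace

variable {F : Type*} [NormedAddCommGroup F] [InnerProductSpace ℝ F] [CompleteSpace F]

theorem gradient_fun_add {g h : F → ℝ} {z : F} (hg : DifferentiableAt ℝ g z)
    (hh : DifferentiableAt ℝ h z) :
    gradient (fun x => g x + h x) z = gradient g z + gradient h z := by
  simp only [gradient, fderiv_fun_add hg hh, map_add]

theorem norm_gradient_eq_of_gradient_add_eq_zero {g h : F → ℝ} {z : F}
    (hg : DifferentiableAt ℝ g z) (hh : DifferentiableAt ℝ h z)
    (hz : gradient (fun x => g x + h x) z = 0) :
    ‖gradient g z‖ = ‖gradient h z‖ := by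
  rw [gradient_fun_add hg hh, add_eq_zero_iff_eq_neg] at hz
  rw [hz, norm_neg]

theorem sub_le_div_of_pl_of_norm_gradient_sq_le {g : F → ℝ} {μ gstar B : ℝ} {z : F} (hμ : 0 < μ)
    (hpl : 2 * μ * (g z - gstar) ≤ ‖gradient g z‖ ^ 2) (hB : ‖gradient g z‖ ^ 2 ≤ B) :
    g z - gstar ≤ B / (2 * μ) := by
  rw [le_div_iff₀ (by positivity)]
  linarith

theorem stmt_6_general {d : ℕ} (f g h : EuclideanSpace ℝ (Fin d) → ℝ) (μ B₁ B₂ gstar : ℝ)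
    (hμ : 0 < μ)
    (hf : f = fun x => g x + h x)
    (hdg : Differentiable ℝ g) (hdh : Differentiable ℝ h)
    (hlb : ∀ x, gstar ≤ g x)
    (hpl : ∀ x, 2 * μ * (g x - gstar) ≤ ‖gradient g x‖ ^ 2)
    (hbdd : ∀ x, |h x| ≤ B₁)
    (hgrad : ∀ x, ‖gradient h x‖ ^ 2 ≤ B₂)
    (x y : EuclideanSpace ℝ (Fin d))
    (hx : gradient f x = 0) (hy : gradient f y = 0) :
    |f x - f y| ≤ 2 * B₁ + B₂ / (2 * μ) := by
  subst hf
  have hg_stationary : ∀ z, gradient (fun x => g x + h x) z = 0 → g z - gstar ≤ B₂ / (2 * μ) :=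
    fun z hz => sub_le_div_of_pl_of_norm_gradient_sq_le hμ (hpl z)
      (by rw [norm_gradient_eq_of_gradient_add_eq_zero (hdg z) (hdh z) hz]; exact hgrad z)
  have hgx := hg_stationary x hx
  have hgy := hg_stationary y hy
  have hhx := abs_le.mp (hbdd x)
  have hhy := abs_le.mp (hbdd y)
  have hlbx := hlb x
  have hlby := hlb y
  rw [abs_le]
  constructor <;> linarith

/-- If `f = g + h` with `g` `μ`-PL with infimum `gstar`, `|h| ≤ B₁` and `‖∇h‖² ≤ B₂`,
then for any two stationary points `x, y` of `f`, `|f x − f y| ≤ 2B₁ + B₂/(2μ)`. -/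
theorem stmt_6 {d : ℕ} (f g h : EuclideanSpace ℝ (Fin d) → ℝ) (μ B₁ B₂ gstar : ℝ)
    (hμ : 0 < μ) (hB₁ : 0 ≤ B₁) (hB₂ : 0 ≤ B₂)
    (hf : f = fun x => g x + h x)
    (hdg : Differentiable ℝ g) (hdh : Differentiable ℝ h)
    (hgstar : gstar = ⨅ x, g x)
    (hlb : ∀ x, gstar ≤ g x)
    (hpl : ∀ x, 2 * μ * (g x - gstar) ≤ ‖gradient g x‖ ^ 2)
    (hbdd : ∀ x, |h x| ≤ B₁)
    (hgrad : ∀ x, ‖gradient h x‖ ^ 2 ≤ B₂)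
    (x y : EuclideanSpace ℝ (Fin d))
    (hx : gradient f x = 0) (hy : gradient f y = 0) :
    |f x - f y| ≤ 2 * B₁ + B₂ / (2 * μ) :=
  stmt_6_general f g h μ B₁ B₂ gstar hμ hf hdg hdh hlb hpl hbdd hgrad x y hx hy
end

section
/- For f(x) = x² + a·x·sin(bx) smoothed with Gaussian noise N(0, ζ²): the smoothed function equals f_ζ(x) = x² + ζ² + a·e^{−b²ζ²/2}(bζ²·cos(bx) + x·sin(bx)). -/
open MeasureTheory ProbabilityTheory Real
open scoped NNReal

/-!
Substituting `y = x - u` turns the smoothing into an integral against `N(x, ζ²)`. The quadratic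
part is then the second moment `x² + ζ²`, and `E[y sin(by)]` is the imaginary part of
`E[y e^{iby}]`, the derivative at `z = ib` of the complex moment generating function
`z ↦ exp(zx + ζ²z²/2)`.
-/

namespace ProbabilityTheory

variable {μ : ℝ} {v : ℝ≥0}

lemma integral_comp_const_sub_gaussianReal {E : Type*} [NormedAddCommGroup E] [NormedSpace ℝ E]
    (g : ℝ → E) (x : ℝ) :
    ∫ u, g (x - u) ∂gaussianReal μ v = ∫ y, g y ∂gaussianReal (x - μ) v := by
  rw [← gaussianReal_map_const_sub]
  exact ((Homeomorph.subLeft x).measurableEmbedding.integral_map g).symm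

lemma integral_sq_gaussianReal : ∫ y, y ^ 2 ∂gaussianReal μ v = μ ^ 2 + v := by
  have h := variance_eq_sub (memLp_id_gaussianReal (μ := μ) (v := v) 2)
  simp only [variance_id_gaussianReal, Pi.pow_apply, id, integral_id_gaussianReal] at h
  linarith

lemma integrable_smul_of_bdd_gaussianReal {E : Type*} [NormedAddCommGroup E] [NormedSpace ℝ E]
    {g : ℝ → E} (hg : AEStronglyMeasurable g (gaussianReal μ v)) {C : ℝ} (hC : ∀ y, ‖g y‖ ≤ C) :
    Integrable (fun y ↦ y • g y) (gaussianReal μ v) :=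
  ((memLp_id_gaussianReal 1).integrable le_rfl).smul_bdd C hg (ae_of_all _ hC)

lemma integral_mul_cexp_gaussianReal (z : ℂ) :
    ∫ y, y * Complex.exp (z * y) ∂gaussianReal μ v
      = (μ + v * z) * Complex.exp (z * μ + v * z ^ 2 / 2) := by
  have hMGF := hasDerivAt_complexMGF (X := id) (μ := gaussianReal μ v) (z := z) (by simp)
  rw [funext complexMGF_id_gaussianReal] at hMGF
  have hexponent : HasDerivAt (fun z : ℂ ↦ z * μ + v * z ^ 2 / 2) (μ + v * z) z := by
    refine (((hasDerivAt_id' z).mul_const (μ : ℂ)).fun_add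
      (((hasDerivAt_pow 2 z).const_mul (v : ℂ)).div_const 2)).congr_deriv ?_
    push_cast
    ring
  exact hMGF.unique (hexponent.cexp.congr_deriv (mul_comm _ _))

lemma integral_mul_sin_gaussianReal (b : ℝ) :
    ∫ y, y * Real.sin (b * y) ∂gaussianReal μ v
      = Real.exp (-(b ^ 2 * v) / 2) * (b * v * Real.cos (b * μ) + μ * Real.sin (b * μ)) := by
  have hrot : ∀ y : ℝ, (b : ℂ) * Complex.I * y = ((b * y : ℝ) : ℂ) * Complex.I := fun y ↦ by
    push_cast
    ring
  have hint : Integrable (fun y : ℝ ↦ (y : ℂ) * Complex.exp (b * Complex.I * y))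
      (gaussianReal μ v) := by
    refine (integrable_smul_of_bdd_gaussianReal (by fun_prop) (C := 1) fun y ↦ ?_).congr
      (ae_of_all _ fun y ↦ Complex.real_smul)
    rw [hrot, Complex.norm_exp_ofReal_mul_I]
  have him : ∀ y : ℝ, ((y : ℂ) * Complex.exp (b * Complex.I * y)).im = y * Real.sin (b * y) :=
    fun y ↦ by rw [hrot, Complex.im_ofReal_mul, Complex.exp_ofReal_mul_I_im]
  have hexponent : (b : ℂ) * Complex.I * μ + v * (b * Complex.I) ^ 2 / 2
      = ((-(b ^ 2 * v) / 2 : ℝ) : ℂ) + ((b * μ : ℝ) : ℂ) * Complex.I := by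
    push_cast
    ring_nf
    rw [Complex.I_sq]
    ring
  calc ∫ y, y * Real.sin (b * y) ∂gaussianReal μ v
      = (∫ y, (y : ℂ) * Complex.exp (b * Complex.I * y) ∂gaussianReal μ v).im := by
        simp_rw [← him]
        exact integral_im hint
    _ = _ := by
        rw [integral_mul_cexp_gaussianReal, hexponent, Complex.exp_add, Complex.exp_mul_I,
          ← Complex.ofReal_exp, ← Complex.ofReal_cos, ← Complex.ofReal_sin]
        simp only [Complex.mul_im, Complex.mul_re, Complex.add_re, Complex.add_im,
          Complex.ofReal_re, Complex.ofReal_im, Complex.I_re, Complex.I_im]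
        ring

end ProbabilityTheory

theorem stmt_12_general (a b : ℝ) (ζ : ℝ≥0) :
    ∀ x : ℝ,
      (∫ u, ((x - u) ^ 2 + a * (x - u) * Real.sin (b * (x - u)))
          ∂(gaussianReal 0 (ζ ^ 2))) =
        x ^ 2 + (ζ : ℝ) ^ 2 +
          a * Real.exp (-(b ^ 2 * (ζ : ℝ) ^ 2) / 2) *
            (b * (ζ : ℝ) ^ 2 * Real.cos (b * x) + x * Real.sin (b * x)) := by
  intro x
  have hsq : Integrable (fun y ↦ y ^ 2) (gaussianReal x (ζ ^ 2)) :=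
    (memLp_id_gaussianReal 2).integrable_sq
  have hsin : Integrable (fun y ↦ y * Real.sin (b * y)) (gaussianReal x (ζ ^ 2)) :=
    integrable_smul_of_bdd_gaussianReal (by fun_prop) (C := 1) fun y ↦
      (Real.norm_eq_abs _).trans_le (Real.abs_sin_le_one _)
  rw [integral_comp_const_sub_gaussianReal (fun y ↦ y ^ 2 + a * y * Real.sin (b * y)), sub_zero]
  simp only [mul_assoc a]
  rw [integral_add hsq (hsin.const_mul a), integral_const_mul, integral_sq_gaussianReal,
    integral_mul_sin_gaussianReal]
  push_cast
  ring

/-- Gaussian smoothing of `f(x) = x² + a·x·sin(bx)` with `N(0, ζ²)` noise equals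
`x² + ζ² + a·e^{−b²ζ²/2}(bζ²·cos(bx) + x·sin(bx))`. -/
theorem stmt_12 (a b : ℝ) (ha : 0 < a) (hb : 0 < b) (ζ : ℝ≥0) :
    ∀ x : ℝ,
      (∫ u, ((x - u) ^ 2 + a * (x - u) * Real.sin (b * (x - u)))
          ∂(gaussianReal 0 (ζ ^ 2))) =
        x ^ 2 + (ζ : ℝ) ^ 2 +
          a * Real.exp (-(b ^ 2 * (ζ : ℝ) ^ 2) / 2) *
            (b * (ζ : ℝ) ^ 2 * Real.cos (b * x) + x * Real.sin (b * x)) :=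
  stmt_12_general a b ζ
end

section
/- Equality in expectation for one step: let x₀ ∈ ℝᵈ be fixed, w a zero-mean random vector, and set x₁ = x₀ − γ∇f(x₀) + γw, y₁ = x₀ − γ∇f(x₀) (deterministic), and z₁ = x₀ − γ∇f(x₀ − u) with u = γw' where w' is an independent copy of w. Then E[z₁] = x₀ − γ E_w[∇f(x₀ − γw)] and, defining y'₁ via one SGD step followed by a full-gradient correction as in the paper, E[y'₂] = E[z₂] when the smoothing distribution equals γ times the noise distribution. -/
open MeasureTheory ProbabilityTheory

/-! Both identities follow from linearity of expectation: the noise term `γ • w` of the SGD step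
averages to zero, and since `w` and `w'` have the same law, averaging `∇f (c - γ • w')` gives the
same vector as averaging `∇f (c - γ • w)`. -/

theorem measurable_gradient {𝕜 F : Type*} [RCLike 𝕜] [NormedAddCommGroup F]
    [InnerProductSpace 𝕜 F] [CompleteSpace F] [MeasurableSpace F] [BorelSpace F]
    (f : F → 𝕜) : Measurable (gradient f) :=
  (InnerProductSpace.toDual 𝕜 F).symm.continuous.measurable.comp (measurable_fderiv 𝕜 f)

section Expectation

variable {Ω E : Type*} [MeasurableSpace Ω] {P : Measure Ω} [NormedAddCommGroup E]
  [NormedSpace ℝ E]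

theorem integral_sub_smul {a g : Ω → E} (ha : Integrable a P) (hg : Integrable g P) (γ : ℝ) :
    ∫ ω, (a ω - γ • g ω) ∂P = ∫ ω, a ω ∂P - γ • ∫ ω, g ω ∂P := by
  rw [integral_sub (g := fun ω => γ • g ω) ha (hg.smul γ), integral_smul]

theorem integral_const_sub_smul [CompleteSpace E] [IsProbabilityMeasure P] (c : E) {g : Ω → E}
    (hg : Integrable g P) (γ : ℝ) :
    ∫ ω, (c - γ • g ω) ∂P = c - γ • ∫ ω, g ω ∂P := by
  rw [integral_sub_smul (integrable_const c) hg, integral_const, probReal_univ, one_smul]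

end Expectation

theorem stmt_19_general {d : ℕ} (f : EuclideanSpace ℝ (Fin d) → ℝ) (γ : ℝ)
    {Ω : Type*} [MeasurableSpace Ω] (P : Measure Ω) [IsProbabilityMeasure P]
    (w w' : Ω → EuclideanSpace ℝ (Fin d))
    (hmeas : AEMeasurable w P) (hmeas' : AEMeasurable w' P)
    (hlaw : Measure.map w P = Measure.map w' P)
    (hmean : (∫ ω, w ω ∂P) = 0)
    (hIntw : Integrable w P)
    (hInt1 : ∀ c : EuclideanSpace ℝ (Fin d),
      Integrable (fun ω => gradient f (c - γ • w ω)) P)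
    (hInt2 : ∀ c : EuclideanSpace ℝ (Fin d),
      Integrable (fun ω => gradient f (c - γ • w' ω)) P)
    (x₀ b : EuclideanSpace ℝ (Fin d)) :
    (∫ ω, (x₀ - γ • gradient f (x₀ - γ • w' ω)) ∂P) =
        x₀ - γ • (∫ ω, gradient f (x₀ - γ • w ω) ∂P) ∧
      (∫ ω, ((b - γ • w ω) - γ • gradient f (b - γ • w ω)) ∂P) =
        (∫ ω, (b - γ • gradient f (b - γ • w' ω)) ∂P) := by
  have hid : IdentDistrib w' w P P := ⟨hmeas', hmeas, hlaw.symm⟩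
  have smoothed_gradient_eq (c : EuclideanSpace ℝ (Fin d)) :
      ∫ ω, gradient f (c - γ • w' ω) ∂P = ∫ ω, gradient f (c - γ • w ω) ∂P :=
    (hid.comp ((measurable_gradient f).comp
      (measurable_const.sub (measurable_id.const_smul γ)))).integral_eq
  constructor
  · rw [integral_const_sub_smul x₀ (hInt2 x₀), smoothed_gradient_eq]
  · rw [integral_sub_smul (a := fun ω => b - γ • w ω) ((integrable_const b).sub (hIntw.smul γ))
        (hInt1 b),
      integral_const_sub_smul b hIntw, hmean, smul_zero, sub_zero,
      integral_const_sub_smul b (hInt2 b), smoothed_gradient_eq]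

/-- Equality in expectation for one step (Kleinberg et al. style): for fixed `x₀`,
zero-mean noise `w` and an independent copy `w'` of `w` (so the smoothing distribution of
`u = γw'` equals `γ` times the noise distribution), the perturbed-GD step
`z₁ = x₀ − γ∇f(x₀ − γw')` satisfies `E[z₁] = x₀ − γ E_w[∇f(x₀ − γw)]`; moreover with
`b = x₀ − γ∇f(x₀)` (the common deterministic first step), the SGD-then-full-gradient
iterate `y'₂ = (b − γw) − γ∇f(b − γw)` and the perturbed-GD iterate
`z₂ = b − γ∇f(b − γw')` agree in expectation: `E[y'₂] = E[z₂]`. -/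
theorem stmt_19 {d : ℕ} (f : EuclideanSpace ℝ (Fin d) → ℝ)
    (hdiff : Differentiable ℝ f) (γ : ℝ)
    {Ω : Type*} [MeasurableSpace Ω] (P : Measure Ω) [IsProbabilityMeasure P]
    (w w' : Ω → EuclideanSpace ℝ (Fin d))
    (hmeas : AEMeasurable w P) (hmeas' : AEMeasurable w' P)
    (hlaw : Measure.map w P = Measure.map w' P)
    (hindep : IndepFun w w' P)
    (hmean : (∫ ω, w ω ∂P) = 0)
    (hIntw : Integrable w P)
    (hInt1 : ∀ c : EuclideanSpace ℝ (Fin d),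
      Integrable (fun ω => gradient f (c - γ • w ω)) P)
    (hInt2 : ∀ c : EuclideanSpace ℝ (Fin d),
      Integrable (fun ω => gradient f (c - γ • w' ω)) P)
    (x₀ b : EuclideanSpace ℝ (Fin d))
    (hb : b = x₀ - γ • gradient f x₀) :
    (∫ ω, (x₀ - γ • gradient f (x₀ - γ • w' ω)) ∂P) =
        x₀ - γ • (∫ ω, gradient f (x₀ - γ • w ω) ∂P) ∧
      (∫ ω, ((b - γ • w ω) - γ • gradient f (b - γ • w ω)) ∂P) =
        (∫ ω, (b - γ • gradient f (b - γ • w' ω)) ∂P) :=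
  stmt_19_general f γ P w w' hmeas hmeas' hlaw hmean hIntw hInt1 hInt2 x₀ b
end
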